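/- Let E be a connected, countable amplified directed graph, let H ∈ ℋ(E ×₁ ℤ), and let V_H be the set of maximal elements of {K ∈ ℋ_vert : K ⊆ H} with respect to set inclusion. Suppose that for each v ∈ E⁰ there is a unique integer n_v such that H(v, n_v) ∈ V_H, and suppose that whenever K and K' are distinct elements of V_H and n ≥ 0 we have K ⊄ lt_n(K'). Then for all x, y ∈ E⁰ with n_x < n_y, the set xE¹y is empty. -/

import Mathlib

/-- A directed graph: a set of vertices, a set of edges, and range and source maps. -/
structure DirGraph where
  V : Type
  E : Type
  r : E → V
  s : E → V

namespace DirGraph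

variable (G : DirGraph)

/-- The skew-product graph `E ×₁ ℤ`. -/
def skew : DirGraph where
  V := G.V × ℤ
  E := G.E × ℤ
  r := fun e => (G.r e.1, e.2 + 1)
  s := fun e => (G.s e.1, e.2)

/-- `G.PathRel v w n` : there is a path of length `n` from `v` to `w`
(vertices are paths of length `0`). -/
inductive PathRel : G.V → G.V → ℕ → Prop
  | nil (v : G.V) : PathRel v v 0
  | cons (e : G.E) {w : G.V} {n : ℕ} : PathRel (G.r e) w n → PathRel (G.s e) w (n + 1)

/-- A set of vertices is hereditary if it contains the range of every edge whose
source it contains. -/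
def Hereditary (H : Set G.V) : Prop := ∀ e : G.E, G.s e ∈ H → G.r e ∈ H

/-- `H(v, n)`: the smallest hereditary subset of `(E ×₁ ℤ)⁰` containing `(v, n)`. -/
def Hgen (v : G.V) (n : ℤ) : Set (G.V × ℤ) :=
  ⋂₀ {K : Set (G.V × ℤ) | G.skew.Hereditary K ∧ (v, n) ∈ K}

/-- The translation action `lt_k(H) = {(v, n + k) : (v, n) ∈ H}`. -/
def lt (k : ℤ) (H : Set (G.V × ℤ)) : Set (G.V × ℤ) :=
  (fun p : G.V × ℤ => (p.1, p.2 + k)) '' H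

/-- The hereditary set `H₀ = {(v, n) : v ∈ E⁰, n ≥ 0}`. -/
def H0 : Set (G.V × ℤ) := {p | 0 ≤ p.2}

/-- A graph is amplified if for all vertices `v, w` the set `vE¹w` of edges from `v`
to `w` is empty or infinite. -/
def Amplified : Prop :=
  ∀ v w : G.V, {e : G.E | G.s e = v ∧ G.r e = w} = ∅ ∨ {e : G.E | G.s e = v ∧ G.r e = w}.Infinite

/-- A graph is connected if the smallest equivalence relation on the vertices containing
`{(s e, r e) : e ∈ E¹}` is everything. -/
def Connected : Prop :=
  ∀ v w : G.V, Relation.EqvGen (fun a b => ∃ e : G.E, G.s e = a ∧ G.r e = b) v w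

/-- `L` has a unique predecessor in the poset of hereditary subsets of `(E ×₁ ℤ)⁰`. -/
def UniquePred (L : Set (G.V × ℤ)) : Prop :=
  ∃ K : Set (G.V × ℤ), G.skew.Hereditary K ∧ K ⊂ L ∧
    ∀ K' : Set (G.V × ℤ), G.skew.Hereditary K' → K' ⊂ L → K' ⊆ K

/-- `ℋ_vert`: the hereditary subsets of `(E ×₁ ℤ)⁰` having a unique predecessor. -/
def HVert : Set (Set (G.V × ℤ)) := {L | G.skew.Hereditary L ∧ G.UniquePred L}

/-- `V₀ = {H(v, 0) : v ∈ E⁰}`. -/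
def V0 : Set (Set (G.V × ℤ)) := {L | ∃ v : G.V, L = G.Hgen v 0}


theorem lt_hereditary (k : ℤ) {H : Set (G.V × ℤ)}
    (hH : G.skew.Hereditary H) : G.skew.Hereditary (G.lt k H) := by
  rintro ⟨f, m⟩ hs
  obtain ⟨⟨v, n⟩, hvn, heq⟩ := hs
  have h1 : v = G.s f := congrArg Prod.fst heq
  have h2 : n + k = m := congrArg Prod.snd heq
  subst h1
  refine ⟨(G.r f, n + 1), hH (f, n) hvn, ?_⟩
  show ((G.r f : G.V), n + 1 + k) = (G.r f, m + 1)
  rw [Prod.ext_iff]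
  exact ⟨rfl, by omega⟩

theorem H0_hereditary : G.skew.Hereditary G.H0 := by
  rintro ⟨f, m⟩ hm
  have : 0 ≤ m := hm
  show 0 ≤ m + 1
  omega

/-- The hereditary subsets of the skew-product graph, as a type. -/
def HS := {L : Set (G.V × ℤ) // G.skew.Hereditary L}

/-- Translation on hereditary subsets of the skew product. -/
def ltH (k : ℤ) (A : G.HS) : G.HS := ⟨G.lt k A.1, G.lt_hereditary k A.2⟩

/-- `H₀` as an element of `G.HS`. -/
def H0H : G.HS := ⟨G.H0, G.H0_hereditary⟩

/-- The vertex set `Ē⁰` of the graph recovered from `(ℋ(E ×₁ ℤ), ⊆, lt, H₀)`. -/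
def Ebar0 : Set (Set (G.V × ℤ)) := {L | L ∈ G.HVert ∧ L ⊆ G.H0 ∧ ¬ L ⊆ G.lt 1 G.H0}

/-- The graph `Ē` recovered from `(ℋ(E ×₁ ℤ), ⊆, lt, H₀)`. -/
noncomputable def Ebar : DirGraph where
  V := G.Ebar0
  E := {t : Set (G.V × ℤ) × ℕ × Set (G.V × ℤ) //
          t.1 ∈ G.Ebar0 ∧ t.2.2 ∈ G.Ebar0 ∧ G.lt 1 t.2.2 ⊆ t.1}
  s := fun t => ⟨t.1.1, t.2.1⟩
  r := fun t => ⟨t.1.2.2, t.2.2.1⟩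

end DirGraph

/-!
An edge `e` from `x` to `y` puts `(y, n_x + 1)` into the hereditary set `H(x, n_x)`,
so `H(y, n_y) ⊆ lt_{n_y - n_x - 1}(H(y, n_x + 1)) ⊆ lt_{n_y - n_x - 1}(H(x, n_x))`. As
`n_x < n_y`, the vertex `(x, n_x)` is not in `H(y, n_y)`, so the two elements of `V_H` are
distinct, and the inclusion contradicts the hypothesis on `V_H`.
-/

namespace DirGraph

variable (G : DirGraph)

theorem Hgen_hereditary (v : G.V) (n : ℤ) : G.skew.Hereditary (G.Hgen v n) :=
  fun e he _ hK => hK.1 e (he _ hK)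

theorem mem_Hgen (v : G.V) (n : ℤ) : (v, n) ∈ G.Hgen v n :=
  fun _ hK => hK.2

theorem Hgen_subset {v : G.V} {n : ℤ} {K : Set (G.V × ℤ)}
    (hK : G.skew.Hereditary K) (hv : (v, n) ∈ K) : G.Hgen v n ⊆ K :=
  Set.sInter_subset_of_mem ⟨hK, hv⟩

theorem Hgen_subset_le_snd (v : G.V) (n : ℤ) : G.Hgen v n ⊆ {p | n ≤ p.2} :=
  G.Hgen_subset (fun e (he : n ≤ e.2) => show n ≤ e.2 + 1 by omega) (le_refl n)

theorem Hgen_ne_of_lt {v w : G.V} {m n : ℤ} (h : n < m) : G.Hgen w m ≠ G.Hgen v n := by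
  intro heq
  have : n ≥ m := G.Hgen_subset_le_snd w m (heq ▸ G.mem_Hgen v n)
  omega

theorem Hgen_r_subset_Hgen_s (e : G.E) (n : ℤ) : G.Hgen (G.r e) (n + 1) ⊆ G.Hgen (G.s e) n :=
  G.Hgen_subset (G.Hgen_hereditary _ n) (G.Hgen_hereditary _ n (e, n) (G.mem_Hgen _ n))

theorem Hgen_add_subset_lt (v : G.V) (n k : ℤ) : G.Hgen v (n + k) ⊆ G.lt k (G.Hgen v n) :=
  G.Hgen_subset (G.lt_hereditary k (G.Hgen_hereditary v n)) ⟨(v, n), G.mem_Hgen v n, rfl⟩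

theorem Hgen_r_subset_lt_Hgen_s (e : G.E) (m n : ℤ) :
    G.Hgen (G.r e) m ⊆ G.lt (m - n - 1) (G.Hgen (G.s e) n) :=
  calc G.Hgen (G.r e) m = G.Hgen (G.r e) (n + 1 + (m - n - 1)) := by congr 1; ring
    _ ⊆ G.lt (m - n - 1) (G.Hgen (G.r e) (n + 1)) := G.Hgen_add_subset_lt _ _ _
    _ ⊆ G.lt (m - n - 1) (G.Hgen (G.s e) n) := Set.image_mono (G.Hgen_r_subset_Hgen_s e n)

end DirGraph

open DirGraph

theorem no_edge_up_general (G : DirGraph)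
    (VH : Set (Set (G.V × ℤ)))
    (nv : G.V → ℤ)
    (hnv : ∀ v : G.V, G.Hgen v (nv v) ∈ VH ∧ ∀ m : ℤ, G.Hgen v m ∈ VH → m = nv v)
    (h3 : ∀ K ∈ VH, ∀ K' ∈ VH, K ≠ K' → ∀ n : ℤ, 0 ≤ n → ¬ K ⊆ G.lt n K')
    (x y : G.V) (hxy : nv x < nv y) :
    {e : G.E | G.s e = x ∧ G.r e = y} = ∅ := by
  refine Set.eq_empty_iff_forall_notMem.2 fun e ⟨hs, hr⟩ => ?_
  subst hs hr
  exact h3 _ (hnv _).1 _ (hnv _).1 (G.Hgen_ne_of_lt hxy) _ (by omega)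
    (G.Hgen_r_subset_lt_Hgen_s e _ _)

theorem no_edge_up (G : DirGraph) [Countable G.V] [Countable G.E]
    (hconn : G.Connected) (hG : G.Amplified)
    (Hs : Set (G.V × ℤ)) (hHs : G.skew.Hereditary Hs)
    (VH : Set (Set (G.V × ℤ)))
    (hVH : VH = {K | K ∈ G.HVert ∧ K ⊆ Hs ∧
                  ∀ K' ∈ G.HVert, K' ⊆ Hs → K ⊆ K' → K = K'})
    (nv : G.V → ℤ)
    (hnv : ∀ v : G.V, G.Hgen v (nv v) ∈ VH ∧ ∀ m : ℤ, G.Hgen v m ∈ VH → m = nv v)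
    (h3 : ∀ K ∈ VH, ∀ K' ∈ VH, K ≠ K' → ∀ n : ℤ, 0 ≤ n → ¬ K ⊆ G.lt n K')
    (x y : G.V) (hxy : nv x < nv y) :
    {e : G.E | G.s e = x ∧ G.r e = y} = ∅ :=
  no_edge_up_general G VH nv hnv h3 x y hxy
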